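/- Let (X_k), (Y_k), (Z_k) be sequences of non-negative real numbers such that ∑_{k=0}^∞ Y_k < ∞ and X_{k+1} ≤ X_k + Y_k − Z_k for all k. Then the sequence (X_k) converges and ∑_{k=0}^∞ Z_k < ∞. -/

import Mathlib

/-!
Subtracting the partial sums of `Y` turns `X` into a sequence `W k = X k - ∑_{i<k} Y i` with
`W (k+1) ≤ W k - Z k`. Since the partial sums of `Y` converge, `W` is bounded below, so it is
antitone and convergent, hence so is `X = W + ∑_{i<k} Y i`; telescoping bounds the partial sums
of `Z` by `W 0 - inf W`.
-/

open Filter Finset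

section DecreasingBy

variable {W Z : ℕ → ℝ}

theorem sum_range_le_sub_of_succ_le_sub (h : ∀ k, W (k + 1) ≤ W k - Z k) (n : ℕ) :
    ∑ k ∈ range n, Z k ≤ W 0 - W n := by
  rw [← sum_range_sub']
  exact sum_le_sum fun k _ => by linarith [h k]

theorem exists_tendsto_and_summable_of_succ_le_sub (hZ : ∀ k, 0 ≤ Z k)
    (hW : BddBelow (Set.range W)) (h : ∀ k, W (k + 1) ≤ W k - Z k) :
    (∃ l, Tendsto W atTop (nhds l)) ∧ Summable Z := by
  have hanti : Antitone W := antitone_nat_of_succ_le fun k => by linarith [h k, hZ k]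
  obtain ⟨b, hb⟩ := hW
  refine ⟨⟨_, tendsto_atTop_ciInf hanti ⟨b, hb⟩⟩, summable_of_sum_range_le hZ (c := W 0 - b) ?_⟩
  intro n
  linarith [sum_range_le_sub_of_succ_le_sub h n, hb (Set.mem_range_self n)]

end DecreasingBy

theorem robbins_siegmund_deterministic_general
    (X Y Z : ℕ → ℝ)
    (hX : ∀ k, 0 ≤ X k) (hZ : ∀ k, 0 ≤ Z k)
    (hYsum : Summable Y)
    (hrec : ∀ k, X (k+1) ≤ X k + Y k - Z k) :
    (∃ l : ℝ, Tendsto X atTop (nhds l)) ∧ Summable Z := by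
  set S : ℕ → ℝ := fun n => ∑ i ∈ range n, Y i
  have hS : Tendsto S atTop (nhds (∑' k, Y k)) := hYsum.hasSum.tendsto_sum_nat
  obtain ⟨B, hB⟩ := hS.bddAbove_range
  have hW : BddBelow (Set.range (X - S)) := by
    refine ⟨-B, ?_⟩
    rintro _ ⟨k, rfl⟩
    simp only [Pi.sub_apply]
    linarith [hX k, hB (Set.mem_range_self k)]
  have hstep : ∀ k, (X - S) (k + 1) ≤ (X - S) k - Z k := fun k => by
    simp only [Pi.sub_apply, S, sum_range_succ]
    linarith [hrec k]
  obtain ⟨⟨l, hl⟩, hZsum⟩ := exists_tendsto_and_summable_of_succ_le_sub hZ hW hstep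
  exact ⟨⟨l + ∑' k, Y k, by simpa using hl.add hS⟩, hZsum⟩

/-- Robbins–Siegmund-type deterministic lemma: if `X, Y, Z` are non-negative real
sequences with `∑ Y k < ∞` and `X (k+1) ≤ X k + Y k - Z k` for all `k`, then `X`
converges and `∑ Z k < ∞`. -/
theorem robbins_siegmund_deterministic
    (X Y Z : ℕ → ℝ)
    (hX : ∀ k, 0 ≤ X k) (hY : ∀ k, 0 ≤ Y k) (hZ : ∀ k, 0 ≤ Z k)
    (hYsum : Summable Y)
    (hrec : ∀ k, X (k+1) ≤ X k + Y k - Z k) :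
    (∃ l : ℝ, Tendsto X atTop (nhds l)) ∧ Summable Z :=
  robbins_siegmund_deterministic_general X Y Z hX hZ hYsum hrec
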